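/- arXiv:2304.04109 — 8 statements merged into one kernel-verified Lean document; each statement's English description precedes it below -/
import Mathlib

section
/- There is no odd perfect number of the form n = 5^α · M^(2β), where α and β are positive integers, M is a squarefree positive integer, and 5 does not divide M. -/
/-! Write `σ` for `σ 1`. Perfection of `n = 5^α M^(2β)` reads `σ(5^α) ∏_{q ∣ M} σ(q^(2β)) = 2n`.
Every `σ(q^(2β))` is odd, so `α` is odd, hence `3 ∣ σ(5^α)` and `3 ∣ M`. As `5 ∤ σ(5^α)`, some
`σ(q^(2β))` is divisible by `5`, which forces `5 ∣ 2β + 1`. Then `11 ∣ σ(3^(2β))` and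
`3221 ∣ σ(11^(2β))`, so `11, 3221 ∣ M`; both are `≡ 1 (mod 5)`, so their factors give `5^2 ∣ n`.
Hence `5^2 · 3^4 · 11^4 ∣ n`, but this divisor is already abundant
(`31/25 · 121/81 · 16105/14641 > 2`), and a perfect number has no abundant divisor. -/

open ArithmeticFunction Finset
open scoped ArithmeticFunction.sigma

-- Unless `x = 1`, both `x ^ n` and `x ^ (r - 1)` equal `1` with coprime exponents.
theorem ZMod.natCast_eq_zero_of_geom_sum_eq_zero {r : ℕ} [Fact r.Prime] {x : ZMod r} {n : ℕ}
    (hn : n.Coprime (r - 1)) (h : ∑ i ∈ range n, x ^ i = 0) : (n : ZMod r) = 0 := by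
  by_cases hx : x = 1
  · simpa [hx] using h
  have hxn : x ^ n = 1 := sub_eq_zero.mp (by rw [← geom_sum_mul, h, zero_mul])
  rcases eq_or_ne x 0 with rfl | hx0
  · obtain rfl : n = 0 := by
      by_contra hn0
      simp [zero_pow hn0] at hxn
    exact Nat.cast_zero
  · exact absurd ((pow_eq_one_iff_of_coprime hn).mp ⟨hxn, ZMod.pow_card_sub_one_eq_one hx0⟩) hx

namespace ArithmeticFunction

variable {p k : ℕ}

theorem natCast_sigma_one_prime_pow {R : Type*} [Semiring R] (hp : p.Prime) (k : ℕ) :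
    ((σ 1 (p ^ k) : ℕ) : R) = ∑ i ∈ range (k + 1), (p : R) ^ i := by
  simp [sigma_one_apply_prime_pow hp]

theorem natCast_sigma_one_prime_pow_of_natCast_eq_one {R : Type*} [Semiring R] (hp : p.Prime)
    (h : (p : R) = 1) (k : ℕ) : ((σ 1 (p ^ k) : ℕ) : R) = k + 1 := by
  simp [natCast_sigma_one_prime_pow hp, h]

theorem dvd_sigma_one_prime_pow_of_natCast_eq_one {m : ℕ} (hp : p.Prime)
    (h : (p : ZMod m) = 1) (hk : m ∣ k + 1) : m ∣ σ 1 (p ^ k) := by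
  rw [← ZMod.natCast_eq_zero_iff, natCast_sigma_one_prime_pow_of_natCast_eq_one hp h,
    ← Nat.cast_succ, ZMod.natCast_eq_zero_iff]
  exact hk

theorem even_sigma_one_prime_pow_iff (hp : p.Prime) (hodd : Odd p) :
    Even (σ 1 (p ^ k)) ↔ Odd k := by
  rw [← ZMod.natCast_eq_zero_iff_even,
    natCast_sigma_one_prime_pow_of_natCast_eq_one hp hodd.natCast_zmod_two, ← Nat.cast_succ,
    ZMod.natCast_eq_zero_iff_even, Nat.even_add_one, Nat.not_even_iff_odd]

theorem dvd_sigma_one_prime_pow_of_natCast_eq_neg_one {m : ℕ} (hp : p.Prime)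
    (h : (p : ZMod m) = -1) (hk : Odd k) : m ∣ σ 1 (p ^ k) := by
  rw [← ZMod.natCast_eq_zero_iff, natCast_sigma_one_prime_pow hp, h, neg_one_geom_sum,
    if_pos hk.add_one]

theorem not_dvd_sigma_one_prime_pow (hp : p.Prime) (k : ℕ) : ¬ p ∣ σ 1 (p ^ k) := by
  have := Fact.mk hp
  rw [← ZMod.natCast_eq_zero_iff, natCast_sigma_one_prime_pow hp, ZMod.natCast_self,
    sum_range_succ']
  simp

theorem dvd_sigma_one_prime_pow_of_dvd_pow_sub_one {m d : ℕ} (hp : p.Prime)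
    (hm : m ∣ p ^ d - 1) (hd : d ∣ k + 1) (hcop : m.Coprime (p - 1)) : m ∣ σ 1 (p ^ k) := by
  have hgeom : (p - 1) * σ 1 (p ^ k) = p ^ (k + 1) - 1 := by
    have := geom_sum_mul_add (p - 1) (k + 1)
    rw [Nat.sub_add_cancel hp.one_le] at this
    rw [sigma_one_apply_prime_pow hp, mul_comm, ← this, Nat.add_sub_cancel]
  exact hcop.dvd_of_dvd_mul_left (hgeom ▸ hm.trans (Nat.pow_sub_one_dvd_pow_sub_one p hd))

theorem dvd_add_one_of_dvd_sigma_one_prime_pow {r : ℕ} (hp : p.Prime) (hr : r.Prime)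
    (hcop : (k + 1).Coprime (r - 1)) (h : r ∣ σ 1 (p ^ k)) : r ∣ k + 1 := by
  have := Fact.mk hr
  rw [← ZMod.natCast_eq_zero_iff, natCast_sigma_one_prime_pow hp] at h
  exact (ZMod.natCast_eq_zero_iff _ _).mp (ZMod.natCast_eq_zero_of_geom_sum_eq_zero hcop h)

theorem IsMultiplicative.map_pow_of_squarefree {R : Type*} [CommMonoidWithZero R]
    {f : ArithmeticFunction R} (hf : f.IsMultiplicative) {M : ℕ} (hM : Squarefree M) (e : ℕ) :
    f (M ^ e) = ∏ p ∈ M.primeFactors, f (p ^ e) := by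
  conv_lhs => rw [← Nat.prod_primeFactors_of_squarefree hM, ← prod_pow]
  exact hf.map_prod _ _ fun p hp q hq hpq =>
    ((Nat.coprime_primes (Nat.prime_of_mem_primeFactors hp)
      (Nat.prime_of_mem_primeFactors hq)).mpr hpq).pow e e

theorem sigma_pow_dvd_sigma_pow_of_dvd {d M : ℕ} (hM : Squarefree M) (hd : d ∣ M) (k e : ℕ) :
    σ k (d ^ e) ∣ σ k (M ^ e) := by
  obtain ⟨c, rfl⟩ := hd
  rw [mul_pow,
    isMultiplicative_sigma.map_mul_of_coprime ((Nat.coprime_of_squarefree_mul hM).pow e e)]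
  exact dvd_mul_right _ _

theorem odd_sigma_one_pow_of_squarefree {M e : ℕ} (hM : Squarefree M) (hodd : Odd M)
    (he : Even e) : Odd (σ 1 (M ^ e)) := by
  rw [isMultiplicative_sigma.map_pow_of_squarefree hM]
  refine prod_induction _ Odd (fun _ _ => Odd.mul) odd_one fun q hq => ?_
  have hq := Nat.mem_primeFactors.mp hq
  rw [← Nat.not_even_iff_odd, even_sigma_one_prime_pow_iff hq.1 (hodd.of_dvd_nat hq.2.1),
    Nat.not_odd_iff_even]
  exact he

end ArithmeticFunction

theorem Nat.abundant_five_sq_mul_thirtyThree_pow_four : Nat.Abundant (5 ^ 2 * 33 ^ 4) := by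
  rw [Nat.abundant_iff_sum_divisors, ← sigma_one_apply,
    show 5 ^ 2 * 33 ^ 4 = 5 ^ 2 * 3 ^ 4 * 11 ^ 4 by norm_num,
    isMultiplicative_sigma.map_mul_of_coprime (by norm_num),
    isMultiplicative_sigma.map_mul_of_coprime (by norm_num),
    sigma_one_apply_prime_pow (by norm_num), sigma_one_apply_prime_pow (by norm_num),
    sigma_one_apply_prime_pow (by norm_num)]
  norm_num [sum_range_succ]

section FivePowMulPow

variable {M α e : ℕ}

theorem sigma_five_pow_mul_pow_eq_of_perfect (h5M : ¬ 5 ∣ M) (hperf : (5 ^ α * M ^ e).Perfect) :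
    σ 1 (5 ^ α) * σ 1 (M ^ e) = 2 * (5 ^ α * M ^ e) := by
  rw [← isMultiplicative_sigma.map_mul_of_coprime
    ((Nat.prime_five.coprime_iff_not_dvd.mpr h5M).pow α e), sigma_one_apply]
  exact (Nat.perfect_iff_sum_divisors_eq_two_mul hperf.2).mp hperf

theorem Nat.Prime.dvd_of_dvd_two_mul_five_pow_mul_pow {r : ℕ} (hr : r.Prime) (hr2 : r ≠ 2)
    (hr5 : r ≠ 5) (h : r ∣ 2 * (5 ^ α * M ^ e)) : r ∣ M := by
  have h2 : ¬ r ∣ 2 := fun h => hr2 ((Nat.prime_dvd_prime_iff_eq hr Nat.prime_two).mp h)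
  have h5 : ¬ r ∣ 5 ^ α := fun h =>
    hr5 ((Nat.prime_dvd_prime_iff_eq hr Nat.prime_five).mp (hr.dvd_of_dvd_pow h))
  exact hr.dvd_of_dvd_pow ((hr.dvd_mul.mp ((hr.dvd_mul.mp h).resolve_left h2)).resolve_left h5)

theorem dvd_two_mul_of_dvd_sigma_one_pow (hM : Squarefree M)
    (hσ : σ 1 (5 ^ α) * σ 1 (M ^ e) = 2 * (5 ^ α * M ^ e)) {d m : ℕ} (hd : d ∣ M)
    (h : m ∣ σ 1 (d ^ e)) :
    m ∣ 2 * (5 ^ α * M ^ e) :=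
  hσ ▸ (h.trans (sigma_pow_dvd_sigma_pow_of_dvd hM hd 1 e)).mul_left _

theorem odd_of_sigma_five_pow_mul_pow_eq (hM : Squarefree M)
    (hσ : σ 1 (5 ^ α) * σ 1 (M ^ e) = 2 * (5 ^ α * M ^ e)) (hMo : Odd M) (he : Even e) :
    Odd α := by
  have h2 : 2 ∣ σ 1 (5 ^ α) * σ 1 (M ^ e) := hσ ▸ dvd_mul_right 2 _
  refine (even_sigma_one_prime_pow_iff Nat.prime_five (by decide)).mp (even_iff_two_dvd.mpr ?_)
  exact (Nat.prime_two.dvd_mul.mp h2).resolve_right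
    (odd_sigma_one_pow_of_squarefree hM hMo he).not_two_dvd_nat

theorem five_dvd_add_one_of_sigma_five_pow_mul_pow_eq (hM : Squarefree M)
    (hσ : σ 1 (5 ^ α) * σ 1 (M ^ e) = 2 * (5 ^ α * M ^ e)) (hα : α ≠ 0) (he : Even e) :
    5 ∣ e + 1 := by
  have h5 : 5 ∣ σ 1 (5 ^ α) * σ 1 (M ^ e) :=
    hσ ▸ ((dvd_pow_self 5 hα).mul_right _).mul_left 2
  have h5M := (Nat.prime_five.dvd_mul.mp h5).resolve_left
    (not_dvd_sigma_one_prime_pow Nat.prime_five α)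
  rw [isMultiplicative_sigma.map_pow_of_squarefree hM] at h5M
  obtain ⟨q, hq, h5q⟩ := (Nat.prime_iff.mp Nat.prime_five).dvd_finsetProd_iff _ |>.mp h5M
  exact dvd_add_one_of_dvd_sigma_one_prime_pow (Nat.prime_of_mem_primeFactors hq)
    Nat.prime_five (by simpa using he.add_one.coprime_two_right.pow_right 2) h5q

theorem Nat.Prime.dvd_of_dvd_sigma_one_pow (hM : Squarefree M)
    (hσ : σ 1 (5 ^ α) * σ 1 (M ^ e) = 2 * (5 ^ α * M ^ e)) {r d : ℕ} (hr : r.Prime)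
    (hr2 : r ≠ 2) (hr5 : r ≠ 5) (hd : d ∣ M) (h : r ∣ σ 1 (d ^ e)) : r ∣ M :=
  hr.dvd_of_dvd_two_mul_five_pow_mul_pow hr2 hr5 (dvd_two_mul_of_dvd_sigma_one_pow hM hσ hd h)

end FivePowMulPow

theorem no_odd_perfect_five_sqfree :
    ¬ ∃ (n M α β : ℕ),
      0 < α ∧ 0 < β ∧ 0 < M ∧ Squarefree M ∧ ¬ (5 ∣ M) ∧
      n = 5 ^ α * M ^ (2 * β) ∧ Odd n ∧ Nat.Perfect n := by
  rintro ⟨n, M, α, β, hα, hβ, -, hM, h5M, rfl, hodd, hperf⟩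
  have hMo : Odd M := (Nat.odd_pow_iff (by omega)).mp (Nat.Odd.of_mul_right hodd)
  have he : Even (2 * β) := even_two_mul β
  have hσ := sigma_five_pow_mul_pow_eq_of_perfect h5M hperf
  have h3 : 3 ∣ M := Nat.prime_three.dvd_of_dvd_two_mul_five_pow_mul_pow (by norm_num)
    (by norm_num) (hσ ▸ (dvd_sigma_one_prime_pow_of_natCast_eq_neg_one Nat.prime_five
      (by decide) (odd_of_sigma_five_pow_mul_pow_eq hM hσ hMo he)).mul_right _)
  have h5 := five_dvd_add_one_of_sigma_five_pow_mul_pow_eq hM hσ hα.ne' he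
  -- `3 ^ 5 - 1 = 2 * 11 ^ 2` and `11 ^ 5 - 1 = 2 * 5 ^ 2 * 3221`
  have h11 : 11 ∣ M := (by norm_num : Nat.Prime 11).dvd_of_dvd_sigma_one_pow hM hσ
    (by norm_num) (by norm_num) h3
    (dvd_sigma_one_prime_pow_of_dvd_pow_sub_one Nat.prime_three (by norm_num) h5 (by norm_num))
  have h3221 : 3221 ∣ M := (by norm_num : Nat.Prime 3221).dvd_of_dvd_sigma_one_pow hM hσ
    (by norm_num) (by norm_num) h11
    (dvd_sigma_one_prime_pow_of_dvd_pow_sub_one (by norm_num) (by norm_num) h5 (by norm_num))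
  have h25 : 25 ∣ 5 ^ α * M ^ (2 * β) := by
    refine (by norm_num : Nat.Coprime 25 2).dvd_of_dvd_mul_left
      (dvd_two_mul_of_dvd_sigma_one_pow hM hσ (Nat.Coprime.mul_dvd_of_dvd_of_dvd (by norm_num)
        h11 h3221) ?_)
    rw [mul_pow, isMultiplicative_sigma.map_mul_of_coprime
      ((by norm_num : Nat.Coprime 11 3221).pow _ _)]
    exact mul_dvd_mul (dvd_sigma_one_prime_pow_of_natCast_eq_one (by norm_num) (by decide) h5)
      (dvd_sigma_one_prime_pow_of_natCast_eq_one (by norm_num) (by decide) h5)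
  have h33 : 33 ^ 4 ∣ M ^ (2 * β) := (pow_dvd_pow 33 (by omega)).trans
    (pow_dvd_pow_of_dvd (Nat.Coprime.mul_dvd_of_dvd_of_dvd (by norm_num) h3 h11) _)
  have hd : 5 ^ 2 * 33 ^ 4 ∣ 5 ^ α * M ^ (2 * β) :=
    Nat.Coprime.mul_dvd_of_dvd_of_dvd (by norm_num) h25 (h33.mul_left _)
  exact (Nat.abundant_five_sq_mul_thirtyThree_pow_four.of_dvd hd hperf.2.ne').ne' hperf.1
end

section
/- There is no odd perfect number of the form n = 5^α · 3^(2b) · q₁^(6k₁+2) · ... · q_t^(6k_t+2), where α, b are positive integers, k₁, ..., k_t are nonnegative integers, 5 < q₁ < ... < q_t are primes, and at least one of the primes q₁, ..., q_t is good. -/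
/-- Φ₃(x) = x² + x + 1, the third cyclotomic polynomial evaluated at x. -/
def Phi3 (x : ℕ) : ℕ := x ^ 2 + x + 1

/-- Σ, the set of primes congruent to 2 or 4 mod 7. -/
def SigmaSet : Set ℕ := {p | p.Prime ∧ (p % 7 = 2 ∨ p % 7 = 4)}

/-- T(x), the set of primes q ≠ 3 dividing Φ₃(x). -/
def T (x : ℕ) : Set ℕ := {q | q.Prime ∧ q ≠ 3 ∧ q ∣ Phi3 x}

/-- The recursively defined sets S_n(p). -/
def S (p : ℕ) : ℕ → Set ℕ
  | 0 => {p}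
  | n + 1 => S p n ∪ ⋃ x ∈ S p n, T x

/-- A prime p > 7 is good if S_n(p) ∩ Σ is nonempty for some n. -/
def IsGood (p : ℕ) : Prop := p.Prime ∧ 7 < p ∧ ∃ n : ℕ, (S p n ∩ SigmaSet).Nonempty


/-! Let `P` be the set of primes dividing `n` other than `3` and `5`. Each `x ∈ P` occurs in `n`
to an exponent `e ≡ 2 (mod 3)`, so `Φ₃(x)` divides `σ(x^e) = 1 + x + ⋯ + x^e`, which divides
`σ(n) = 2n`. As `Φ₃(x)` is never divisible by `2` or `5`, every prime of `T(x)` lies in `P`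
again, hence `S_N(p) ⊆ P` for a good `q_j = p`. A prime `r` of `Σ` in `P` gives
`7 ∣ Φ₃(r) ∣ 2n`, so `7 ∈ P` and then `7² ∣ n`. Together with `5 · 3² ∣ n` this makes `n` a
multiple of the abundant number `2205 = 3² · 5 · 7²` (`σ(2205) = 4446`), so `n` is not
perfect. -/

open ArithmeticFunction Finset Function
open scoped ArithmeticFunction.sigma

lemma two_not_dvd_phi3 (x : ℕ) : ¬ 2 ∣ Phi3 x := by
  rw [Nat.dvd_iff_mod_eq_zero, Phi3]
  have := Nat.mod_lt x two_pos
  interval_cases h : x % 2 <;> simp [Nat.add_mod, Nat.pow_mod, h]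

lemma five_not_dvd_phi3 (x : ℕ) : ¬ 5 ∣ Phi3 x := by
  rw [Nat.dvd_iff_mod_eq_zero, Phi3]
  have := Nat.mod_lt x (show 0 < 5 by norm_num)
  interval_cases h : x % 5 <;> simp [Nat.add_mod, Nat.pow_mod, h]

lemma seven_dvd_phi3 {x : ℕ} (h : x % 7 = 2 ∨ x % 7 = 4) : 7 ∣ Phi3 x := by
  rw [Nat.dvd_iff_mod_eq_zero, Phi3]
  rcases h with h | h <;> simp [Nat.add_mod, Nat.pow_mod, h]

lemma phi3_dvd_sum_range_pow (x m : ℕ) : Phi3 x ∣ ∑ i ∈ range (3 * m), x ^ i := by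
  induction m with
  | zero => simp
  | succ m ih =>
    have hblock : ∑ i ∈ range 3, x ^ (3 * m + i) = x ^ (3 * m) * Phi3 x := by
      simp only [sum_range_succ, sum_range_zero, Phi3]; ring
    rw [mul_add_one, sum_range_add, hblock]
    exact dvd_add ih (dvd_mul_left _ _)

lemma phi3_dvd_sigma_prime_pow {p e : ℕ} (hp : p.Prime) (he : 3 ∣ e + 1) :
    Phi3 p ∣ σ 1 (p ^ e) := by
  obtain ⟨m, hm⟩ := he
  rw [sigma_one_apply_prime_pow hp, hm]
  exact phi3_dvd_sum_range_pow p m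

lemma sigma_ordProj_dvd_sigma {n p : ℕ} (hp : p.Prime) (hn : n ≠ 0) :
    σ 1 (ordProj[p] n) ∣ σ 1 n := by
  conv_rhs => rw [← Nat.ordProj_mul_ordCompl_eq_self n p]
  rw [isMultiplicative_sigma.map_mul_of_coprime ((Nat.coprime_ordCompl hp hn).pow_left _)]
  exact dvd_mul_right _ _

lemma abundant_2205 : Nat.Abundant 2205 := by decide +kernel

lemma factorization_mul_prod_pow {ι : Type*} [Fintype ι] {c : ℕ} {q e : ι → ℕ}
    (hc : c ≠ 0) (hq : ∀ i, (q i).Prime) (hinj : Injective q) (hqc : ∀ i, ¬ q i ∣ c) (j : ι) :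
    (c * ∏ i, q i ^ e i).factorization (q j) = e j := by
  rw [Nat.factorization_mul hc (prod_ne_zero_iff.2 fun i _ => pow_ne_zero _ (hq i).ne_zero),
    Nat.factorization_prod fun i _ => pow_ne_zero _ (hq i).ne_zero]
  simp only [Finsupp.add_apply, Nat.factorization_eq_zero_of_not_dvd (hqc j), zero_add,
    Finsupp.finsetSum_apply, (hq _).factorization_pow, Finsupp.single_apply]
  rw [Fintype.sum_eq_single j fun i hi => if_neg (hinj.ne hi), if_pos rfl]

lemma exists_eq_of_prime_dvd_mul_prod_pow {ι : Type*} [Fintype ι] {c x : ℕ} {q e : ι → ℕ}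
    (hq : ∀ i, (q i).Prime) (hx : x.Prime) (hxc : ¬ x ∣ c) (h : x ∣ c * ∏ i, q i ^ e i) :
    ∃ i, x = q i := by
  obtain ⟨i, -, hi⟩ := (hx.prime.dvd_finsetProd_iff _).1 ((hx.dvd_mul.1 h).resolve_left hxc)
  exact ⟨i, (Nat.prime_dvd_prime_iff_eq hx (hq i)).1 (hx.dvd_of_dvd_pow hi)⟩

lemma Nat.Prime.eq_five_or_eq_three_of_dvd {x a b : ℕ} (hx : x.Prime)
    (h : x ∣ 5 ^ a * 3 ^ b) : x = 5 ∨ x = 3 := by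
  rcases hx.dvd_mul.1 h with h | h
  · exact .inl ((Nat.prime_dvd_prime_iff_eq hx (by norm_num)).1 (hx.dvd_of_dvd_pow h))
  · exact .inr ((Nat.prime_dvd_prime_iff_eq hx (by norm_num)).1 (hx.dvd_of_dvd_pow h))

namespace Nat.Perfect

variable {n : ℕ}

lemma phi3_dvd_two_mul (hn : n.Perfect) {p : ℕ} (hp : p.Prime)
    (he : 3 ∣ n.factorization p + 1) : Phi3 p ∣ 2 * n := by
  have hσ : σ 1 n = 2 * n := by
    rw [sigma_one_apply]; exact (perfect_iff_sum_divisors_eq_two_mul hn.2).1 hn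
  exact hσ ▸ (phi3_dvd_sigma_prime_pow hp he).trans (sigma_ordProj_dvd_sigma hp hn.2.ne')

variable (hn : n.Perfect) (hexp : ∀ x ∈ n.primeFactors \ {3, 5}, 3 ∣ n.factorization x + 1)
include hn hexp

lemma phi3_dvd_two_mul_of_mem {x : ℕ} (hx : x ∈ n.primeFactors \ {3, 5}) : Phi3 x ∣ 2 * n :=
  hn.phi3_dvd_two_mul (prime_of_mem_primeFactors (mem_sdiff.1 hx).1) (hexp x hx)

lemma T_subset_primeFactors_sdiff {x : ℕ} (hx : x ∈ n.primeFactors \ {3, 5}) :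
    T x ⊆ ↑(n.primeFactors \ {3, 5}) := by
  rintro r ⟨hr, hr3, hrΦ⟩
  have hr2 : r ≠ 2 := by rintro rfl; exact two_not_dvd_phi3 x hrΦ
  have hr5 : r ≠ 5 := by rintro rfl; exact five_not_dvd_phi3 x hrΦ
  have hrn : r ∣ n := ((Nat.coprime_primes hr prime_two).2 hr2).dvd_of_dvd_mul_left
    (hrΦ.trans (hn.phi3_dvd_two_mul_of_mem hexp hx))
  simp [hr, hrn, hn.2.ne', hr3, hr5]

lemma S_subset_primeFactors_sdiff {p : ℕ} (hp : p ∈ n.primeFactors \ {3, 5}) (N : ℕ) :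
    S p N ⊆ ↑(n.primeFactors \ {3, 5}) := by
  induction N with
  | zero => simpa [S] using hp
  | succ N ih =>
    exact Set.union_subset ih
      (Set.iUnion₂_subset fun x hx => hn.T_subset_primeFactors_sdiff hexp (ih hx))

lemma seven_sq_dvd {p : ℕ} (hp : p ∈ n.primeFactors \ {3, 5}) (hp7 : p % 7 = 2 ∨ p % 7 = 4) :
    7 ^ 2 ∣ n := by
  have h7n : 7 ∣ n := Nat.Coprime.dvd_of_dvd_mul_left (by norm_num)
    ((seven_dvd_phi3 hp7).trans (hn.phi3_dvd_two_mul_of_mem hexp hp))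
  have h7 : 7 ∈ n.primeFactors \ {3, 5} := by simp [h7n, hn.2.ne', prime_seven]
  have := hexp 7 h7
  rw [prime_seven.pow_dvd_iff_le_factorization hn.2.ne']
  omega

lemma S_inter_SigmaSet_eq_empty (h45 : 45 ∣ n) {p : ℕ} (hp : p ∈ n.primeFactors \ {3, 5})
    (N : ℕ) : S p N ∩ SigmaSet = ∅ := by
  refine Set.eq_empty_of_forall_notMem fun r ⟨hrS, _, hrSigma⟩ => ?_
  have h2205 : 2205 ∣ n := Nat.Coprime.mul_dvd_of_dvd_of_dvd (m := 45) (n := 7 ^ 2) (by norm_num)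
    h45 (hn.seven_sq_dvd hexp (hn.S_subset_primeFactors_sdiff hexp hp N hrS) hrSigma)
  exact ((abundant_iff_not_perfect_and_not_deficient hn.2.ne).1
    (abundant_2205.of_dvd h2205 hn.2.ne')).1 hn

end Nat.Perfect

theorem no_odd_perfect_with_good_prime :
    ¬ ∃ (n α b t : ℕ) (q k : Fin t → ℕ),
      0 < α ∧ 0 < b ∧
      (∀ i, (q i).Prime) ∧ (∀ i, 5 < q i) ∧ StrictMono q ∧
      (∃ j, IsGood (q j)) ∧
      n = 5 ^ α * 3 ^ (2 * b) * ∏ i, q i ^ (6 * k i + 2) ∧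
      Odd n ∧ Nat.Perfect n := by
  rintro ⟨n, α, b, t, q, k, hα, hb, hq, hq5, hmono, ⟨j, -, -, N, r, hrS, hrSigma⟩, hn, -,
    hperf⟩
  have hqc : ∀ i, ¬ q i ∣ 5 ^ α * 3 ^ (2 * b) := fun i h => by
    rcases (hq i).eq_five_or_eq_three_of_dvd h with h | h <;> have := hq5 i <;> omega
  have h45 : 45 ∣ n := hn ▸ Dvd.dvd.mul_right
    (mul_dvd_mul (dvd_pow_self 5 hα.ne') (pow_dvd_pow 3 (by omega : 2 ≤ 2 * b))) _
  have hexp : ∀ x ∈ n.primeFactors \ {3, 5}, 3 ∣ n.factorization x + 1 := by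
    intro x hx
    simp only [mem_sdiff, Nat.mem_primeFactors, mem_insert, mem_singleton, not_or] at hx
    obtain ⟨⟨hx, hxn, -⟩, hx3, hx5⟩ := hx
    obtain ⟨i, rfl⟩ := exists_eq_of_prime_dvd_mul_prod_pow hq hx
      (fun h => by rcases hx.eq_five_or_eq_three_of_dvd h with h | h <;> contradiction) (hn ▸ hxn)
    rw [hn, factorization_mul_prod_pow (by positivity) hq hmono.injective hqc]
    omega
  have hqj : q j ∈ n.primeFactors \ {3, 5} := by
    have := hq5 j
    have hqjn : q j ∣ n := hn ▸ (dvd_pow_self (q j) (by omega : 6 * k j + 2 ≠ 0)).trans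
      ((dvd_prod_of_mem (fun i => q i ^ (6 * k i + 2)) (mem_univ j)).trans (dvd_mul_left _ _))
    simp only [mem_sdiff, Nat.mem_primeFactors, mem_insert, mem_singleton]
    exact ⟨⟨hq j, hqjn, hperf.2.ne'⟩, by omega⟩
  exact (hperf.S_inter_SigmaSet_eq_empty hexp h45 hqj N).subset ⟨hrS, hrSigma⟩
end

section
/- Assume that every prime p > 7 is good. Then there is no odd perfect number of the form n = 5^α · 3^(2b) · q₁^(6k₁+2) · ... · q_t^(6k_t+2), where α, b are positive integers, k₁, ..., k_t are nonnegative integers, and q₁, ..., q_t are distinct primes exceeding 5. -/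
set_option maxRecDepth 20000 in
lemma aux_sigma2205 : (∑ e ∈ (2205:ℕ).divisors, e) = 4446 := by decide

lemma aux_geom_dvd (q m : ℕ) : (q^2+q+1) ∣ ∑ i ∈ Finset.range (3*m), q^i := by
  induction m with
  | zero => simp
  | succ m ih =>
    have h : 3*(m+1) = 3*m+1+1+1 := by ring
    rw [h, Finset.sum_range_succ, Finset.sum_range_succ, Finset.sum_range_succ]
    obtain ⟨c, hc⟩ := ih
    exact ⟨c + q^(3*m), by rw [hc]; ring⟩

lemma aux_phi_dvd_sigma {p : ℕ} (hp : p.Prime) (k : ℕ) :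
    Phi3 p ∣ ∑ d ∈ (p^(6*k+2)).divisors, d := by
  rw [Nat.sum_divisors_prime_pow hp]
  have h : 6*k+2+1 = 3*(2*k+1) := by ring
  rw [h]
  simpa [Phi3] using aux_geom_dvd p (2*k+1)

lemma aux_mod3 {r x : ℕ} (hr : r.Prime) (h3 : r ≠ 3) (hdvd : r ∣ Phi3 x) : r % 3 = 1 := by
  haveI : Fact r.Prime := ⟨hr⟩
  set y : ZMod r := (x : ZMod r) with hy
  have h0 : y^2 + y + 1 = 0 := by
    have h := (ZMod.natCast_eq_zero_iff (Phi3 x) r).mpr hdvd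
    rw [Phi3] at h; push_cast at h; linear_combination h
  have hy1 : y ≠ 1 := by
    intro h1
    rw [h1] at h0
    norm_num at h0
    have h30 : ((3:ℕ) : ZMod r) = 0 := by push_cast; linear_combination h0
    have := (ZMod.natCast_eq_zero_iff 3 r).mp h30
    exact h3 ((Nat.prime_dvd_prime_iff_eq hr (by norm_num)).mp this)
  have hy3 : y ^ 3 = 1 := by linear_combination (y - 1) * h0
  haveI : Fact (Nat.Prime 3) := ⟨by norm_num⟩
  have hord : orderOf y = 3 := orderOf_eq_prime hy3 hy1
  have hy0 : y ≠ 0 := by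
    intro h; rw [h] at hy3; simp at hy3
  have hdvd2 : orderOf y ∣ r - 1 := orderOf_dvd_of_pow_eq_one (ZMod.pow_card_sub_one_eq_one hy0)
  rw [hord] at hdvd2
  have := hr.two_le
  omega

lemma aux_seven {s : ℕ} (h : s % 7 = 2 ∨ s % 7 = 4) : 7 ∣ Phi3 s := by
  obtain h | h := h
  · obtain ⟨c, hc⟩ : ∃ c, s = 7*c + 2 := ⟨s/7, by omega⟩
    exact ⟨7*c^2+5*c+1, by subst hc; rw [Phi3]; ring⟩
  · obtain ⟨c, hc⟩ : ∃ c, s = 7*c + 4 := ⟨s/7, by omega⟩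
    exact ⟨7*c^2+9*c+3, by subst hc; rw [Phi3]; ring⟩

lemma aux_sub_sum (d m : ℕ) (hd : 0 < d) (hm : 0 < m) :
    (∑ e ∈ d.divisors, e) * m ≤ ∑ x ∈ (d*m).divisors, x := by
  have hsub : d.divisors.image (fun e => e * m) ⊆ (d*m).divisors := by
    intro x hx
    simp only [Finset.mem_image] at hx
    obtain ⟨e, he, rfl⟩ := hx
    rw [Nat.mem_divisors] at he ⊢
    exact ⟨mul_dvd_mul he.1 dvd_rfl, by positivity⟩
  calc (∑ e ∈ d.divisors, e) * m = ∑ e ∈ d.divisors, e * m := by rw [Finset.sum_mul]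
    _ = ∑ x ∈ d.divisors.image (fun e => e * m), x := by
        rw [Finset.sum_image]
        intro a _ b _ hab
        exact Nat.eq_of_mul_eq_mul_right hm hab
    _ ≤ ∑ x ∈ (d*m).divisors, x := Finset.sum_le_sum_of_subset hsub

lemma aux_geo5 (m : ℕ) : 4 * (∑ i ∈ Finset.range m, 5^i) + 1 = 5^m := by
  induction m with
  | zero => simp
  | succ m ih => rw [Finset.sum_range_succ, pow_succ]; omega

lemma aux_geo3 (m : ℕ) : 2 * (∑ i ∈ Finset.range m, 3^i) + 1 = 3^m := by
  induction m with
  | zero => simp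
  | succ m ih => rw [Finset.sum_range_succ, pow_succ]; omega

theorem no_odd_perfect_of_all_good
    (hgood : ∀ p : ℕ, p.Prime → 7 < p → IsGood p) :
    ¬ ∃ (n α b t : ℕ) (q k : Fin t → ℕ),
      0 < α ∧ 0 < b ∧
      (∀ i, (q i).Prime) ∧ (∀ i, 5 < q i) ∧ Function.Injective q ∧
      n = 5 ^ α * 3 ^ (2 * b) * ∏ i, q i ^ (6 * k i + 2) ∧
      Odd n ∧ Nat.Perfect n := by
  rintro ⟨n, α, b, t, q, k, hα, hb, hqp, hq5, hqinj, hn, hodd, hperf⟩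
  have hn0 : 0 < n := hperf.2
  have hσ : ∑ d ∈ n.divisors, d = 2 * n :=
    (Nat.perfect_iff_sum_divisors_eq_two_mul hn0).mp hperf
  -- classification of prime divisors of n
  have hcases : ∀ r : ℕ, r.Prime → r ∣ n → r = 5 ∨ r = 3 ∨ ∃ j, r = q j := by
    intro r hr hrn
    rw [hn] at hrn
    rcases (Nat.Prime.dvd_mul hr).mp hrn with h | h
    · rcases (Nat.Prime.dvd_mul hr).mp h with h | h
      · exact Or.inl ((Nat.prime_dvd_prime_iff_eq hr (by norm_num)).mp (hr.dvd_of_dvd_pow h))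
      · exact Or.inr (Or.inl
          ((Nat.prime_dvd_prime_iff_eq hr (by norm_num)).mp (hr.dvd_of_dvd_pow h)))
    · obtain ⟨j, _, hj⟩ := (Prime.dvd_finset_prod_iff hr.prime _).mp h
      exact Or.inr (Or.inr ⟨j, (Nat.prime_dvd_prime_iff_eq hr (hqp j)).mp (hr.dvd_of_dvd_pow hj)⟩)
  -- σ of each q-component divides 2n
  have hcomp : ∀ j : Fin t, (∑ d ∈ ((q j)^(6*k j+2)).divisors, d) ∣ 2*n := by
    intro j
    set M := 5 ^ α * 3 ^ (2 * b) * ∏ i ∈ Finset.univ.erase j, q i ^ (6 * k i + 2) with hM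
    have hn' : n = (q j)^(6*k j+2) * M := by
      rw [hn, hM, ← Finset.mul_prod_erase Finset.univ _ (Finset.mem_univ j)]
      ring
    have hcop : Nat.Coprime ((q j)^(6*k j+2)) M := by
      apply Nat.Coprime.pow_left
      rw [Nat.Prime.coprime_iff_not_dvd (hqp j)]
      intro hd
      rw [hM] at hd
      rcases (Nat.Prime.dvd_mul (hqp j)).mp hd with h | h
      · rcases (Nat.Prime.dvd_mul (hqp j)).mp h with h | h
        · have h5 := (Nat.prime_dvd_prime_iff_eq (hqp j) (by norm_num)).mp
            ((hqp j).dvd_of_dvd_pow h)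
          have := hq5 j; omega
        · have h3 := (Nat.prime_dvd_prime_iff_eq (hqp j) (by norm_num)).mp
            ((hqp j).dvd_of_dvd_pow h)
          have := hq5 j; omega
      · obtain ⟨i, hi, hji⟩ := (Prime.dvd_finset_prod_iff (hqp j).prime _).mp h
        have heq : q j = q i :=
          (Nat.prime_dvd_prime_iff_eq (hqp j) (hqp i)).mp ((hqp j).dvd_of_dvd_pow hji)
        rw [Finset.mem_erase] at hi
        exact hi.1 (hqinj heq).symm
    have hmul := Nat.Coprime.sum_divisors_mul hcop
    rw [← hn', hσ] at hmul
    exact ⟨_, hmul⟩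
  -- 7 does not divide n
  have hno7 : ¬ (7 ∣ n) := by
    intro h7
    obtain h | h | ⟨j, hj⟩ := hcases 7 (by norm_num) h7
    · omega
    · omega
    · have h5 : (5:ℕ) ∣ 5^α := dvd_pow_self 5 (by omega)
      have h9 : (9:ℕ) ∣ 3^(2*b) := by
        have h := pow_dvd_pow 3 (show 2 ≤ 2*b by omega)
        norm_num at h; exact h
      have h49 : (49:ℕ) ∣ ∏ i, q i ^ (6*k i+2) := by
        have h1 : (7:ℕ)^2 ∣ (q j)^(6*k j+2) := by
          rw [← hj]; exact pow_dvd_pow _ (by omega)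
        norm_num at h1
        exact dvd_trans h1 (Finset.dvd_prod_of_mem _ (Finset.mem_univ j))
      have h2205 : (2205:ℕ) ∣ n := by
        rw [hn]
        have h := mul_dvd_mul (mul_dvd_mul h5 h9) h49
        norm_num at h
        exact h
      obtain ⟨m, hm⟩ := h2205
      have hm0 : 0 < m := by
        rcases Nat.eq_zero_or_pos m with rfl | h
        · omega
        · exact h
      have hle := aux_sub_sum 2205 m (by norm_num) hm0
      rw [← hm, hσ, aux_sigma2205] at hle
      omega
  -- t cannot be 0
  rcases Nat.eq_zero_or_pos t with rfl | ht
  · have hprod : (∏ i : Fin 0, q i ^ (6*k i+2)) = 1 := by simp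
    rw [hprod, mul_one] at hn
    have hcop : Nat.Coprime (5^α) (3^(2*b)) :=
      Nat.Coprime.pow _ _ (by norm_num)
    have hmul := Nat.Coprime.sum_divisors_mul hcop
    rw [← hn, hσ] at hmul
    rw [Nat.sum_divisors_prime_pow (by norm_num : Nat.Prime 5)] at hmul
    rw [Nat.sum_divisors_prime_pow (by norm_num : Nat.Prime 3)] at hmul
    set A := ∑ i ∈ Finset.range (α+1), 5^i with hA
    set B := ∑ i ∈ Finset.range (2*b+1), 3^i with hB
    have h1 : 4*A + 1 = 5^(α+1) := aux_geo5 _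
    have h2 : 2*B + 1 = 3^(2*b+1) := aux_geo3 _
    have key : (4*A+1)*(2*B+1) = 15*(5^α * 3^(2*b)) := by
      rw [h1, h2, pow_succ, pow_succ]; ring
    have expand : (4*A+1)*(2*B+1) = 8*(A*B)+4*A+2*B+1 := by ring
    have hABn : 2*n = A*B := hmul
    have hnval : n = 5^α * 3^(2*b) := hn
    linarith
  -- so t ≥ 1; no q i equals 7
  have hq7 : ∀ i, q i ≠ 7 := by
    intro i hi
    apply hno7
    rw [← hi, hn]
    apply dvd_mul_of_dvd_right
    exact dvd_trans (dvd_pow_self _ (by omega)) (Finset.dvd_prod_of_mem _ (Finset.mem_univ i))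
  have i0 : Fin t := ⟨0, ht⟩
  have hgt7 : 7 < q i0 := by
    have h5 := hq5 i0
    have h7 := hq7 i0
    have h6 : q i0 ≠ 6 := by
      intro h; have := hqp i0; rw [h] at this; norm_num at this
    omega
  obtain ⟨-, -, m, hSne⟩ := hgood (q i0) (hqp i0) hgt7
  obtain ⟨s, hsS, hsSig⟩ := hSne
  -- chain lemma
  have hchain : ∀ m r, r ∈ S (q i0) m → ∃ j, r = q j := by
    intro m
    induction m with
    | zero => intro r hr; exact ⟨i0, hr⟩
    | succ m ih =>
      intro r hr
      obtain hr | hr := hr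
      · exact ih r hr
      · simp only [Set.mem_iUnion] at hr
        obtain ⟨x, hx, hrT⟩ := hr
        obtain ⟨j, rfl⟩ := ih x hx
        obtain ⟨hrp, hr3, hrd⟩ := hrT
        have hr31 : r % 3 = 1 := aux_mod3 hrp hr3 hrd
        have hrσ : r ∣ 2*n :=
          dvd_trans hrd (dvd_trans (aux_phi_dvd_sigma (hqp j) (k j)) (hcomp j))
        have hrn : r ∣ n := by
          rcases (Nat.Prime.dvd_mul hrp).mp hrσ with h | h
          · have := (Nat.prime_dvd_prime_iff_eq hrp (by norm_num)).mp h
            omega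
          · exact h
        obtain h | h | hj := hcases r hrp hrn
        · omega
        · omega
        · exact hj
  obtain ⟨j, rfl⟩ := hchain m s hsS
  have h7d : 7 ∣ Phi3 (q j) := aux_seven hsSig.2
  have h7σ : (7:ℕ) ∣ 2*n :=
    dvd_trans h7d (dvd_trans (aux_phi_dvd_sigma (hqp j) (k j)) (hcomp j))
  apply hno7
  rcases (Nat.Prime.dvd_mul (by norm_num : Nat.Prime 7)).mp h7σ with h | h
  · omega
  · exact h
end

section
/- Let n be an odd perfect number such that 15 divides n, 5^α exactly divides n, and 3^(2b) exactly divides n, for some positive integers α, b. If 3 divides (α+1)(2b+1), then n has a good prime divisor. -/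
open Finset ArithmeticFunction
open scoped ArithmeticFunction.sigma

theorem geom_sum_dvd_geom_sum_of_dvd {R : Type*} [CommSemiring R] (x : R) {a b : ℕ}
    (h : a ∣ b) : ∑ i ∈ range a, x ^ i ∣ ∑ i ∈ range b, x ^ i := by
  obtain ⟨c, rfl⟩ := h
  induction c with
  | zero => simp
  | succ c ih =>
    rw [Nat.mul_succ, sum_range_add]
    simp_rw [pow_add, ← mul_sum]
    exact dvd_add ih (dvd_mul_left _ _)

theorem phi3_eq_geom_sum (x : ℕ) : Phi3 x = ∑ i ∈ range 3, x ^ i := by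
  simp only [Phi3, sum_range_succ, sum_range_zero]
  ring

theorem odd_phi3 (x : ℕ) : Odd (Phi3 x) := by
  have : x ^ 2 + x = x * (x + 1) := by ring
  exact (this ▸ Nat.even_mul_succ_self x).add_one

theorem sigma_one_dvd_two_mul_of_perfect {m n : ℕ} (hperf : n.Perfect) (hm : m ∣ n)
    (hcop : m.Coprime (n / m)) : σ 1 m ∣ 2 * n := by
  rw [← (Nat.perfect_iff_sum_divisors_eq_two_mul hperf.2).mp hperf, ← sigma_one_apply,
    ← Nat.mul_div_cancel' hm, isMultiplicative_sigma.map_mul_of_coprime hcop]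
  exact dvd_mul_right _ _

theorem phi3_dvd_of_perfect {n p k : ℕ} (hp : p.Prime) (hperf : n.Perfect) (hk : p ^ k ∣ n)
    (hcop : (p ^ k).Coprime (n / p ^ k)) (h3 : 3 ∣ k + 1) : Phi3 p ∣ n := by
  have h2n : Phi3 p ∣ 2 * n := by
    refine (phi3_eq_geom_sum p ▸ geom_sum_dvd_geom_sum_of_dvd p h3).trans ?_
    rw [← sigma_one_apply_prime_pow hp]
    exact sigma_one_dvd_two_mul_of_perfect hperf hk hcop
  exact (odd_phi3 p).coprime_two_right.dvd_of_dvd_mul_left h2n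

theorem mem_S_succ_of_mem_T {p m x q : ℕ} (hx : x ∈ S p m) (hq : q ∈ T x) :
    q ∈ S p (m + 1) :=
  Or.inr (Set.mem_biUnion hx hq)

theorem prime_3737657091169 : Nat.Prime 3737657091169 := by
  refine lucas_primality _ 37 (by reduce_mod_char) fun q hq hdvd => ?_
  have hq' : q ∈ Nat.primeFactorsList 3737657091168 :=
    (Nat.mem_primeFactorsList').2 ⟨hq, hdvd, by norm_num⟩
  simp only [Nat.primeFactorsList_ofNat, List.mem_cons, List.not_mem_nil, or_false,
    or_self_left] at hq'
  rcases hq' with rfl | rfl | rfl | rfl | rfl | rfl | rfl | rfl <;>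
    norm_num <;> reduce_mod_char <;> decide

theorem isGood_31 : IsGood 31 := by
  have h331 : 331 ∈ S 31 1 := mem_S_succ_of_mem_T rfl (by norm_num [T, Phi3])
  exact ⟨by norm_num, by norm_num, 1, 331, h331, by norm_num [SigmaSet]⟩

theorem isGood_13 : IsGood 13 := by
  have h61 : 61 ∈ S 13 1 := mem_S_succ_of_mem_T rfl (by norm_num [T, Phi3])
  have h97 : 97 ∈ S 13 2 := mem_S_succ_of_mem_T h61 (by norm_num [T, Phi3])
  have h3169 : 3169 ∈ S 13 3 := mem_S_succ_of_mem_T h97 (by norm_num [T, Phi3])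
  have h3348577 : 3348577 ∈ S 13 4 := mem_S_succ_of_mem_T h3169 (by norm_num [T, Phi3])
  -- `norm_num` would try to prove this primality by trial division.
  have hbig : 3737657091169 ∈ S 13 5 :=
    mem_S_succ_of_mem_T h3348577 ⟨prime_3737657091169, by norm_num, by norm_num [Phi3]⟩
  have h181 : 181 ∈ S 13 6 := mem_S_succ_of_mem_T hbig (by norm_num [T, Phi3])
  have h79 : 79 ∈ S 13 7 := mem_S_succ_of_mem_T h181 (by norm_num [T, Phi3])
  exact ⟨by norm_num, by norm_num, 7, 79, h79, by norm_num [SigmaSet]⟩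

theorem good_prime_divisor_of_odd_perfect_general (n α b : ℕ)
    (hperf : Nat.Perfect n)
    (h5 : 5 ^ α ∣ n ∧ Nat.gcd (5 ^ α) (n / 5 ^ α) = 1)
    (h3 : 3 ^ (2 * b) ∣ n ∧ Nat.gcd (3 ^ (2 * b)) (n / 3 ^ (2 * b)) = 1)
    (hdvd : 3 ∣ (α + 1) * (2 * b + 1)) :
    ∃ p : ℕ, p.Prime ∧ p ∣ n ∧ IsGood p := by
  rcases Nat.prime_three.dvd_mul.mp hdvd with hα | hb
  · exact ⟨31, by norm_num, phi3_dvd_of_perfect Nat.prime_five hperf h5.1 h5.2 hα, isGood_31⟩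
  · exact ⟨13, by norm_num, phi3_dvd_of_perfect Nat.prime_three hperf h3.1 h3.2 hb, isGood_13⟩

theorem good_prime_divisor_of_odd_perfect (n α b : ℕ) (hα : 0 < α) (hb : 0 < b)
    (hodd : Odd n) (hperf : Nat.Perfect n) (h15 : 15 ∣ n)
    (h5 : 5 ^ α ∣ n ∧ Nat.gcd (5 ^ α) (n / 5 ^ α) = 1)
    (h3 : 3 ^ (2 * b) ∣ n ∧ Nat.gcd (3 ^ (2 * b)) (n / 3 ^ (2 * b)) = 1)
    (hdvd : 3 ∣ (α + 1) * (2 * b + 1)) :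
    ∃ p : ℕ, p.Prime ∧ p ∣ n ∧ IsGood p :=
  good_prime_divisor_of_odd_perfect_general n α b hperf h5 h3 hdvd
end

section
/- Let n = 5^α · 3^(2β) · Q^(2β) be an odd perfect number, where α, β are positive integers and Q > 1 is a squarefree positive integer coprime to 15. Then there exists a prime q dividing Q with q ≡ 1 (mod 5) and 5 ∣ σ(q^(2β)); in particular, the set S = {p prime : p ≡ 1 (mod 5) and p ∣ Q} is nonempty. -/
open Finset ArithmeticFunction

lemma aux_mod_five (m c : ℕ) (hc : ¬ (5 ∣ c))
    (h : 5 ∣ ∑ i ∈ Finset.range (2 * m + 1), c ^ i) : c % 5 = 1 := by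
  haveI : Fact (Nat.Prime 5) := ⟨by norm_num⟩
  have hx : ((c : ZMod 5)) ≠ 0 := by
    intro h0
    exact hc ((ZMod.natCast_eq_zero_iff c 5).mp h0)
  have hsum : (∑ i ∈ Finset.range (2 * m + 1), (c : ZMod 5) ^ i) = 0 := by
    have := (ZMod.natCast_eq_zero_iff
      (∑ i ∈ Finset.range (2 * m + 1), c ^ i) 5).mpr h
    push_cast at this
    exact this
  have hpow : (c : ZMod 5) ^ (2 * m + 1) = 1 := by
    have hg := geom_sum_mul (c : ZMod 5) (2 * m + 1)
    rw [hsum, zero_mul] at hg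
    have := hg.symm
    rwa [sub_eq_zero] at this
  have h4 : (c : ZMod 5) ^ 4 = 1 := ZMod.pow_card_sub_one_eq_one hx
  have ho1 : orderOf ((c : ZMod 5)) ∣ 2 * m + 1 := orderOf_dvd_of_pow_eq_one hpow
  have ho2 : orderOf ((c : ZMod 5)) ∣ 4 := orderOf_dvd_of_pow_eq_one h4
  have hcop : Nat.Coprime (2 * m + 1) 4 := by
    have h2 : Nat.Coprime 2 (2 * m + 1) :=
      (Nat.prime_two.coprime_iff_not_dvd).mpr (by omega)
    have : Nat.Coprime 4 (2 * m + 1) := by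
      have := h2.pow_left 2
      norm_num at this
      exact this
    exact this.symm
  have hord : orderOf ((c : ZMod 5)) = 1 :=
    Nat.eq_one_of_dvd_coprimes hcop ho1 ho2
  have hx1 : (c : ZMod 5) = 1 := orderOf_eq_one_iff.mp hord
  have : (c : ZMod 5) = ((1 : ℕ) : ZMod 5) := by simpa using hx1
  have := (ZMod.natCast_eq_natCast_iff c 1 5).mp this
  simpa [Nat.ModEq] using this

theorem exists_prime_one_mod_five (n Q α β : ℕ) (hα : 0 < α) (hβ : 0 < β)
    (hQ : 1 < Q) (hsf : Squarefree Q) (hcop : Nat.Coprime Q 15)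
    (hn : n = 5 ^ α * 3 ^ (2 * β) * Q ^ (2 * β))
    (hodd : Odd n) (hperf : Nat.Perfect n) :
    ∃ q : ℕ, q.Prime ∧ q ∣ Q ∧ q % 5 = 1 ∧
      5 ∣ ArithmeticFunction.sigma 1 (q ^ (2 * β)) := by
  have hQ5 : Nat.Coprime Q 5 := Nat.Coprime.coprime_dvd_right (by norm_num) hcop
  have hQ3 : Nat.Coprime Q 3 := Nat.Coprime.coprime_dvd_right (by norm_num) hcop
  have hn0 : 0 < n := by
    rw [hn]; positivity
  -- sigma n = 2 n
  have hsig : ArithmeticFunction.sigma 1 n = 2 * n := by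
    rw [ArithmeticFunction.sigma_one_apply]
    exact (Nat.perfect_iff_sum_divisors_eq_two_mul hn0).mp hperf
  -- multiplicativity
  have hc1 : Nat.Coprime (5 ^ α) (3 ^ (2 * β)) :=
    Nat.Coprime.pow _ _ (by norm_num)
  have hc2 : Nat.Coprime (5 ^ α * 3 ^ (2 * β)) (Q ^ (2 * β)) := by
    apply Nat.Coprime.mul
    · exact (Nat.Coprime.pow _ _ (hQ5.symm))
    · exact (Nat.Coprime.pow _ _ (hQ3.symm))
  have hmul : ArithmeticFunction.sigma 1 n =
      ArithmeticFunction.sigma 1 (5 ^ α) * ArithmeticFunction.sigma 1 (3 ^ (2 * β)) *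
        ArithmeticFunction.sigma 1 (Q ^ (2 * β)) := by
    rw [hn, ArithmeticFunction.isMultiplicative_sigma.map_mul_of_coprime hc2,
      ArithmeticFunction.isMultiplicative_sigma.map_mul_of_coprime hc1]
  have h5n : (5 : ℕ) ∣ 2 * n := by
    refine Dvd.dvd.mul_left ?_ 2
    rw [hn]
    exact Dvd.dvd.mul_right (Dvd.dvd.mul_right (dvd_pow_self 5 hα.ne') _) _
  have h5prod : (5 : ℕ) ∣ ArithmeticFunction.sigma 1 (5 ^ α) *
      ArithmeticFunction.sigma 1 (3 ^ (2 * β)) *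
      ArithmeticFunction.sigma 1 (Q ^ (2 * β)) := by
    rw [← hmul, hsig]; exact h5n
  have hp5 : Nat.Prime 5 := by norm_num
  -- sigma of prime powers as geometric sums
  have hsigpp : ∀ p k : ℕ, p.Prime →
      ArithmeticFunction.sigma 1 (p ^ k) = ∑ i ∈ Finset.range (k + 1), p ^ i := by
    intro p k hp
    rw [ArithmeticFunction.sigma_one_apply, Nat.sum_divisors_prime_pow hp]
  -- 5 does not divide sigma (5^α)
  have h5a : ¬ (5 : ℕ) ∣ ArithmeticFunction.sigma 1 (5 ^ α) := by
    rw [hsigpp 5 α hp5]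
    intro hdvd
    have : ((∑ i ∈ Finset.range (α + 1), 5 ^ i : ℕ) : ZMod 5) = 0 :=
      (ZMod.natCast_eq_zero_iff _ 5).mpr hdvd
    push_cast at this
    rw [show ((5 : ZMod 5)) = 0 by decide] at this
    rw [Finset.sum_range_succ'] at this
    simp at this
    exact absurd this (by decide)
  -- 5 does not divide sigma (3^(2β))
  have h3a : ¬ (5 : ℕ) ∣ ArithmeticFunction.sigma 1 (3 ^ (2 * β)) := by
    rw [hsigpp 3 (2 * β) (by norm_num)]
    intro hdvd
    have := aux_mod_five β 3 (by norm_num) hdvd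
    norm_num at this
  -- hence 5 divides sigma (Q^(2β))
  have h5Q : (5 : ℕ) ∣ ArithmeticFunction.sigma 1 (Q ^ (2 * β)) := by
    rcases (Nat.Prime.dvd_mul hp5).mp h5prod with h | h
    · rcases (Nat.Prime.dvd_mul hp5).mp h with h | h
      · exact absurd h h5a
      · exact absurd h h3a
    · exact h
  -- Q^(2β) as product over prime factors
  have hQprod : Q = ∏ p ∈ Q.primeFactors, p := (Nat.prod_primeFactors_of_squarefree hsf).symm
  have hsplit : ArithmeticFunction.sigma 1 (Q ^ (2 * β)) =
      ∏ p ∈ Q.primeFactors, ArithmeticFunction.sigma 1 (p ^ (2 * β)) := by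
    conv_lhs => rw [hQprod, ← Finset.prod_pow]
    apply ArithmeticFunction.isMultiplicative_sigma.map_prod
    intro a ha b hb hab
    have hpa := Nat.prime_of_mem_primeFactors ha
    have hpb := Nat.prime_of_mem_primeFactors hb
    exact Nat.Coprime.pow _ _ ((Nat.coprime_primes hpa hpb).mpr hab)
  rw [hsplit] at h5Q
  obtain ⟨q, hqmem, hqdvd⟩ := hp5.prime.exists_mem_finset_dvd h5Q
  have hqp := Nat.prime_of_mem_primeFactors hqmem
  have hqQ := Nat.dvd_of_mem_primeFactors hqmem
  refine ⟨q, hqp, hqQ, ?_, hqdvd⟩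
  -- q ≡ 1 mod 5
  have hq5 : ¬ (5 : ℕ) ∣ q := by
    intro h5q
    have : (5 : ℕ) ∣ Q := h5q.trans hqQ
    have := Nat.Coprime.eq_one_of_dvd hQ5.symm this
    norm_num at this
  apply aux_mod_five β q hq5
  rwa [hsigpp q (2 * β) hqp] at hqdvd
end

section
/- Let n = 5^α · 3^(2β) · Q^(2β) be an odd perfect number, where α, β are positive integers and Q > 1 is a squarefree positive integer coprime to 15, and suppose 3 does not divide 2β + 1. Then 3^(2β) exactly divides σ(5^α), and consequently 3^(2β−1) exactly divides α + 1. -/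
open ArithmeticFunction Finset

lemma sigma_one_pos {m : ℕ} (hm : m ≠ 0) : 0 < ArithmeticFunction.sigma 1 m := by
  rw [sigma_one_apply]
  exact Finset.sum_pos (fun d hd => Nat.pos_of_mem_divisors hd)
    ⟨m, Nat.mem_divisors_self m hm⟩

lemma aux_not_dvd_sigma {p : ℕ} (β : ℕ) (hp : p.Prime) (h3 : ¬ (3 ∣ 2 * β + 1)) :
    ¬ (3 ∣ ArithmeticFunction.sigma 1 (p ^ (2 * β))) := by
  rw [sigma_one_apply_prime_pow hp, ← ZMod.natCast_eq_zero_iff]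
  push_cast
  have h0 : (p : ZMod 3) = ((p % 3 : ℕ) : ZMod 3) := (ZMod.natCast_mod p 3).symm
  have hcase : p % 3 = 0 ∨ p % 3 = 1 ∨ p % 3 = 2 := by omega
  rcases hcase with h | h | h <;> rw [h0, h]
  · push_cast
    rw [Finset.sum_range_succ']
    simp [pow_succ]
  · push_cast
    simp only [one_pow, Finset.sum_const, Finset.card_range, nsmul_eq_mul, mul_one]
    rw [show ((2 * β + 1 : ℕ) : ZMod 3) = ((2 * β + 1 : ℕ) : ZMod 3) from rfl]
    intro hc
    exact h3 ((ZMod.natCast_eq_zero_iff _ _).mp (by exact_mod_cast hc))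
  · push_cast
    rw [show (2 : ZMod 3) = -1 by decide, neg_one_geom_sum,
      if_neg (by simp [Nat.even_add_one, Nat.even_iff, Nat.add_mul_mod_self_left])]
    exact one_ne_zero
    
lemma exact_of_factorization {M p t : ℕ} (hp : p.Prime) (hM : M ≠ 0)
    (h : M.factorization p = t) :
    p ^ t ∣ M ∧ Nat.gcd (p ^ t) (M / p ^ t) = 1 := by
  subst h
  refine ⟨Nat.ordProj_dvd M p, ?_⟩
  exact Nat.Coprime.pow_left _
    ((Nat.Prime.coprime_iff_not_dvd hp).mpr (Nat.not_dvd_ordCompl hp hM))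

theorem exact_div_sigma_five (n Q α β : ℕ) (hα : 0 < α) (hβ : 0 < β)
    (hQ : 1 < Q) (hsf : Squarefree Q) (hcop : Nat.Coprime Q 15)
    (hn : n = 5 ^ α * 3 ^ (2 * β) * Q ^ (2 * β))
    (hodd : Odd n) (hperf : Nat.Perfect n)
    (h3 : ¬ (3 ∣ 2 * β + 1)) :
    (3 ^ (2 * β) ∣ ArithmeticFunction.sigma 1 (5 ^ α) ∧
      Nat.gcd (3 ^ (2 * β)) (ArithmeticFunction.sigma 1 (5 ^ α) / 3 ^ (2 * β)) = 1) ∧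
    (3 ^ (2 * β - 1) ∣ α + 1 ∧
      Nat.gcd (3 ^ (2 * β - 1)) ((α + 1) / 3 ^ (2 * β - 1)) = 1) := by
  have h3p : Nat.Prime 3 := by norm_num
  have h5p : Nat.Prime 5 := by norm_num
  have hQ0 : Q ≠ 0 := by omega
  have hQcop3 : Nat.Coprime Q 3 := Nat.Coprime.coprime_dvd_right (by norm_num) hcop
  have hQcop5 : Nat.Coprime Q 5 := Nat.Coprime.coprime_dvd_right (by norm_num) hcop
  have hQ3 : ¬ (3 ∣ Q) := fun h => by
    have := Nat.eq_one_of_dvd_coprimes hQcop3 h (dvd_refl 3); omega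
  -- multiplicativity
  have hc1 : Nat.Coprime (5 ^ α) (3 ^ (2 * β)) := Nat.Coprime.pow _ _ (by norm_num)
  have hc2 : Nat.Coprime (5 ^ α * 3 ^ (2 * β)) (Q ^ (2 * β)) :=
    Nat.Coprime.mul (Nat.Coprime.pow _ _ hQcop5.symm) (Nat.Coprime.pow _ _ hQcop3.symm)
  have hσ : ArithmeticFunction.sigma 1 n =
      ArithmeticFunction.sigma 1 (5 ^ α) * ArithmeticFunction.sigma 1 (3 ^ (2 * β)) *
        ArithmeticFunction.sigma 1 (Q ^ (2 * β)) := by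
    rw [hn, isMultiplicative_sigma.map_mul_of_coprime hc2,
      isMultiplicative_sigma.map_mul_of_coprime hc1]
  have hn0 : 0 < n := hperf.2
  have hσn : ArithmeticFunction.sigma 1 n = 2 * n := by
    rw [sigma_one_apply]
    exact (Nat.perfect_iff_sum_divisors_eq_two_mul hn0).mp hperf
  set S := ArithmeticFunction.sigma 1 (5 ^ α) with hS
  have hS0 : S ≠ 0 := (sigma_one_pos (pow_ne_zero _ (by norm_num))).ne'
  have hσ30 : ArithmeticFunction.sigma 1 (3 ^ (2 * β)) ≠ 0 :=
    (sigma_one_pos (pow_ne_zero _ (by norm_num))).ne'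
  have hσQ0 : ArithmeticFunction.sigma 1 (Q ^ (2 * β)) ≠ 0 :=
    (sigma_one_pos (pow_ne_zero _ hQ0)).ne'
  -- value of factorization at 3 of RHS
  have hrhs : (2 * n).factorization 3 = 2 * β := by
    rw [hn, Nat.factorization_mul (by norm_num) (by positivity),
      Nat.factorization_mul (by positivity) (by positivity),
      Nat.factorization_mul (by positivity) (by positivity)]
    simp only [Finsupp.coe_add, Pi.add_apply, Nat.factorization_pow, Finsupp.smul_apply,
      smul_eq_mul]
    rw [Nat.factorization_eq_zero_of_not_dvd (by norm_num : ¬ (3 ∣ 2)),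
      Nat.factorization_eq_zero_of_not_dvd (by norm_num : ¬ (3 ∣ 5)),
      Nat.factorization_eq_zero_of_not_dvd hQ3, Nat.Prime.factorization_self h3p]
    ring
  -- 3 does not divide the other sigma factors
  have h3σ3 : ¬ (3 ∣ ArithmeticFunction.sigma 1 (3 ^ (2 * β))) := aux_not_dvd_sigma β h3p h3
  have h3σQ : ¬ (3 ∣ ArithmeticFunction.sigma 1 (Q ^ (2 * β))) := by
    rw [isMultiplicative_sigma.multiplicative_factorization _ (pow_ne_zero _ hQ0),
      Finsupp.prod]
    intro hdvd
    obtain ⟨q, hqmem, hqdvd⟩ := (h3p.prime.dvd_finset_prod_iff _).mp hdvd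
    rw [Nat.support_factorization] at hqmem
    have hq : q.Prime := Nat.prime_of_mem_primeFactors hqmem
    have hqQ : q ∣ Q := hq.dvd_of_dvd_pow (Nat.dvd_of_mem_primeFactors hqmem)
    have hfq : (Q ^ (2 * β)).factorization q = 2 * β := by
      rw [Nat.factorization_pow, Finsupp.smul_apply, smul_eq_mul,
        Nat.factorization_eq_one_of_squarefree hsf hq hqQ, mul_one]
    rw [hfq] at hqdvd
    exact aux_not_dvd_sigma β hq h3 hqdvd
  -- key : factorization at 3 of S is 2β
  have key : S.factorization 3 = 2 * β := by
    have := congrArg (fun m => m.factorization 3) (hσn ▸ hσ : 2 * n = S * _ * _)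
    rw [Nat.factorization_mul (Nat.mul_ne_zero hS0 hσ30) hσQ0,
      Nat.factorization_mul hS0 hσ30] at this
    simp only [Finsupp.coe_add, Pi.add_apply] at this
    rw [Nat.factorization_eq_zero_of_not_dvd h3σ3, Nat.factorization_eq_zero_of_not_dvd h3σQ,
      hrhs] at this
    omega
  refine ⟨exact_of_factorization h3p hS0 key, ?_⟩
  -- second part
  have h3S : 3 ∣ S := Nat.dvd_of_factorization_pos (by omega)
  -- α + 1 is even
  have heven : Even (α + 1) := by
    by_contra hodd'
    have hc : ((S : ZMod 3)) = 0 := (ZMod.natCast_eq_zero_iff _ _).mpr h3S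
    rw [hS, sigma_one_apply_prime_pow h5p] at hc
    push_cast at hc
    rw [show (5 : ZMod 3) = -1 by decide] at hc
    rw [neg_one_geom_sum, if_neg (by simpa using hodd')] at hc
    exact one_ne_zero hc
  obtain ⟨m, hm⟩ := heven
  have hm' : α + 1 = 2 * m := by omega
  have hm0 : m ≠ 0 := by omega
  -- geometric sum identity
  have hgeom : ∀ t : ℕ, 4 * (∑ k ∈ Finset.range t, 5 ^ k) + 1 = 5 ^ t := by
    intro t
    induction t with
    | zero => simp
    | succ t ih =>
      rw [Finset.sum_range_succ, mul_add, pow_succ]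
      omega
  have hSsum : S = ∑ k ∈ Finset.range (α + 1), 5 ^ k := by
    rw [hS, sigma_one_apply_prime_pow h5p]
  have hsub : 5 ^ (α + 1) - 1 = 4 * S := by
    have := hgeom (α + 1)
    omega
  have h4S : (4 * S).factorization 3 = 2 * β := by
    rw [Nat.factorization_mul (by norm_num) hS0]
    simp only [Finsupp.coe_add, Pi.add_apply]
    rw [Nat.factorization_eq_zero_of_not_dvd (by norm_num : ¬ (3 ∣ 4)), key]
    omega
  haveI : Fact (Nat.Prime 3) := ⟨h3p⟩
  have hLTE : padicValNat 3 (25 ^ m - 1 ^ m) = padicValNat 3 (25 - 1) + padicValNat 3 m :=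
    padicValNat.pow_sub_pow (by decide) (by norm_num) (by norm_num) (by norm_num) hm0
  have h24 : padicValNat 3 (25 - 1 : ℕ) = 1 := by
    rw [← Nat.factorization_def _ h3p, show (25 - 1 : ℕ) = 3 * 8 by norm_num,
      Nat.factorization_mul (by norm_num) (by norm_num)]
    simp only [Finsupp.coe_add, Pi.add_apply]
    rw [Nat.Prime.factorization_self h3p,
      Nat.factorization_eq_zero_of_not_dvd (by norm_num : ¬ (3 ∣ 8))]
  have h25m : (5 : ℕ) ^ (α + 1) = 25 ^ m := by
    rw [hm', pow_mul]
    norm_num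
  have hvm : padicValNat 3 m = 2 * β - 1 := by
    have h1 : (5 ^ (α + 1) - 1 : ℕ).factorization 3 = 2 * β := by rw [hsub, h4S]
    have h2 : (25 ^ m - 1 ^ m : ℕ).factorization 3 = 2 * β := by
      rw [one_pow, ← h25m]; exact h1
    rw [Nat.factorization_def _ h3p, hLTE, h24] at h2
    omega
  have hfα : (α + 1).factorization 3 = 2 * β - 1 := by
    rw [hm', Nat.factorization_mul (by norm_num) hm0]
    simp only [Finsupp.coe_add, Pi.add_apply]
    rw [Nat.factorization_eq_zero_of_not_dvd (by norm_num : ¬ (3 ∣ 2)),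
      Nat.factorization_def _ h3p, hvm]
    omega
  exact exact_of_factorization h3p (by omega) hfα
end

section
/- Let n be an odd perfect number and suppose q^(6k+2) exactly divides n for some prime q with q ≡ 2 or 4 (mod 7) and some nonnegative integer k. Then 7 divides n. -/
open Finset

instance fact_prime_seven : Fact (Nat.Prime 7) := ⟨by norm_num⟩

lemma zmod7_sum_zero (x : ZMod 7) (hx : x = 2 ∨ x = 4) (k : ℕ) :
    ∑ i ∈ Finset.range (6 * k + 2 + 1), x ^ i = 0 := by

  have hx3 : x ^ 3 = 1 := by rcases hx with h | h <;> rw [h] <;> decide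
  have hxne : x ≠ 1 := by rcases hx with h | h <;> rw [h] <;> decide
  have : x ^ (6 * k + 2 + 1) = 1 := by
    have : 6 * k + 2 + 1 = 3 * (2 * k + 1) := by ring
    rw [this, pow_mul, hx3, one_pow]
  have hgeom := geom_sum_mul x (6 * k + 2 + 1)
  rw [this, sub_self] at hgeom
  have hne : x - 1 ≠ 0 := sub_ne_zero.mpr hxne
  rcases mul_eq_zero.mp hgeom with h | h
  · exact h
  · exact absurd h hne

theorem seven_dvd_of_special_prime_power (n q k : ℕ) (hodd : Odd n)
    (hperf : Nat.Perfect n) (hq : q.Prime) (hmod : q % 7 = 2 ∨ q % 7 = 4)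
    (hdvd : q ^ (6 * k + 2) ∣ n)
    (hexact : Nat.gcd (q ^ (6 * k + 2)) (n / q ^ (6 * k + 2)) = 1) :
    7 ∣ n := by
  have hn0 : 0 < n := hperf.2
  set m := q ^ (6 * k + 2) with hm
  have hmul : m * (n / m) = n := Nat.mul_div_cancel' hdvd
  have hcop : Nat.Coprime m (n / m) := hexact
  -- sum of divisors of n = 2n
  have hsum : ∑ d ∈ n.divisors, d = 2 * n :=
    (Nat.perfect_iff_sum_divisors_eq_two_mul hn0).mp hperf
  have hsig : (∑ d ∈ m.divisors, d) * (∑ d ∈ (n / m).divisors, d) = 2 * n := by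
    rw [← hcop.sum_divisors_mul, hmul, hsum]
  -- 7 divides sigma(m)
  have h7m : (7 : ℕ) ∣ ∑ d ∈ m.divisors, d := by
    have : ∑ d ∈ m.divisors, d = ∑ i ∈ Finset.range (6 * k + 2 + 1), q ^ i := by
      have := ArithmeticFunction.sigma_one_apply_prime_pow (p := q) (i := 6 * k + 2) hq
      rw [ArithmeticFunction.sigma_one_apply] at this
      simpa [hm] using this
    rw [this]
    have : ((∑ i ∈ Finset.range (6 * k + 2 + 1), q ^ i : ℕ) : ZMod 7) = 0 := by
      push_cast
      apply zmod7_sum_zero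
      rcases hmod with h | h
      · left
        have : ((q : ℕ) : ZMod 7) = ((q % 7 : ℕ) : ZMod 7) := (ZMod.natCast_mod q 7).symm
        rw [this, h]; decide
      · right
        have : ((q : ℕ) : ZMod 7) = ((q % 7 : ℕ) : ZMod 7) := (ZMod.natCast_mod q 7).symm
        rw [this, h]; decide
    exact (ZMod.natCast_eq_zero_iff _ 7).mp this
  have h7 : (7 : ℕ) ∣ 2 * n := hsig ▸ Dvd.dvd.mul_right h7m _
  have h7p : Nat.Prime 7 := by norm_num
  rcases (Nat.Prime.dvd_mul h7p).mp h7 with h | h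
  · omega
  · exact h
end

section
/- Let n be an odd perfect number with 3^(2b) exactly dividing n for a positive integer b. If 3 divides 2b + 1, then 13 divides n. -/
lemma hne13 : (3 : ZMod 13) ≠ 1 := by decide

lemma h27_13 : (3 : ZMod 13) ^ 3 = 1 := by decide

theorem thirteen_dvd_of_odd_perfect (n b : ℕ) (hb : 0 < b) (hodd : Odd n)
    (hperf : Nat.Perfect n)
    (h3 : 3 ^ (2 * b) ∣ n ∧ Nat.gcd (3 ^ (2 * b)) (n / 3 ^ (2 * b)) = 1)
    (hdvd : 3 ∣ 2 * b + 1) :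
    13 ∣ n := by
  obtain ⟨hd, hgcd⟩ := h3
  have hn0 : 0 < n := hperf.2
  obtain ⟨m, hm⟩ := hd
  have hpow : (0:ℕ) < 3 ^ (2 * b) := by positivity
  have hm' : n / 3 ^ (2 * b) = m := by rw [hm, Nat.mul_div_cancel_left _ hpow]
  have hcop : Nat.Coprime (3 ^ (2 * b)) m := by rwa [hm'] at hgcd
  have hsum : (∑ d ∈ (3 ^ (2 * b)).divisors, d) * (∑ d ∈ m.divisors, d) = 2 * n := by
    rw [← Nat.Coprime.sum_divisors_mul hcop, ← hm]
    exact (Nat.perfect_iff_sum_divisors_eq_two_mul hn0).mp hperf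
  obtain ⟨k, hk⟩ := hdvd
  have h13 : (13 : ℕ) ∣ ∑ d ∈ (3 ^ (2 * b)).divisors, d := by
    rw [Nat.sum_divisors_prime_pow (by norm_num : Nat.Prime 3)]
    rw [← ZMod.natCast_eq_zero_iff]
    push_cast
    haveI : Fact (Nat.Prime 13) := ⟨by norm_num⟩
    rw [hk, geom_sum_eq hne13, pow_mul, h27_13, one_pow, sub_self, zero_div]
  have h2n : (13 : ℕ) ∣ 2 * n := hsum ▸ Dvd.dvd.mul_right h13 _
  exact (Nat.Coprime.dvd_of_dvd_mul_left (by norm_num) h2n)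
end
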